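/- arXiv:2308.16646 — 2 statements merged into one kernel-verified Lean document; each statement's English description precedes it below -/
import Mathlib

section
/- Basic estimates on the relativistic collision kinematics (Lemma 4.1, items (i)–(iii)). Let c > 0 and p, q ∈ ℝ³ with p⁰ = √(c²+|p|²), q⁰ = √(c²+|q|²), g = √(2(p⁰q⁰ − p·q − c²)), s = g² + 4c², and v_φ = (c/4)·g√s/(p⁰q⁰). Then: (i) √(|p×q|² + c²|p−q|²)/√(p⁰q⁰) ≤ g ≤ |p−q| and g² < s ≤ 4p⁰q⁰; (ii) v_φ ≤ min{c, |p−q|/2}; (iii) if p ≠ q, then with ℓ₁ = c(p⁰+q⁰)/2 and j₁ = c|p×q|/g one has ℓ₁² − j₁² = s·c²·|p−q|²/(4g²) ≥ c⁴ + (c²/4)|p−q|². -/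
open MeasureTheory Real Set
open scoped BigOperators ENNReal ContDiff

noncomputable section

abbrev V3 : Type := EuclideanSpace ℝ (Fin 3)

namespace RBE

/-- Euclidean dot product on `V3`. -/
def dot (p q : V3) : ℝ := ∑ i, p i * q i

/-- Cross product on `V3`. -/
def cross (p q : V3) : V3 :=
  (EuclideanSpace.equiv (Fin 3) ℝ).symm
    ![p 1 * q 2 - p 2 * q 1, p 2 * q 0 - p 0 * q 2, p 0 * q 1 - p 1 * q 0]

/-- Relativistic energy `p⁰ = √(c² + |p|²)`. -/
def en (c : ℝ) (p : V3) : ℝ := Real.sqrt (c ^ 2 + ‖p‖ ^ 2)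

/-- Normalized velocity `p̂ = c p / p⁰`. -/
def phat (c : ℝ) (p : V3) : V3 := (c / en c p) • p

/-- Relative momentum `g`. -/
def grel (c : ℝ) (p q : V3) : ℝ :=
  Real.sqrt (2 * (en c p * en c q - dot p q - c ^ 2))

/-- `s = g² + 4c²`. -/
def sOf (c : ℝ) (p q : V3) : ℝ := grel c p q ^ 2 + 4 * c ^ 2

/-- Møller velocity. -/
def vphi (c : ℝ) (p q : V3) : ℝ :=
  (c / 4) * (grel c p q * Real.sqrt (sOf c p q) / (en c p * en c q))

/-- Modified Bessel function of the second kind. -/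
def besselK (j : ℕ) (z : ℝ) : ℝ :=
  (z / 2) ^ j * (Real.Gamma (1 / 2) / Real.Gamma ((j : ℝ) + 1 / 2)) *
    ∫ t in Set.Ioi (1 : ℝ), Real.exp (-z * t) * (t ^ 2 - 1) ^ ((j : ℝ) - 1 / 2)

/-- Local relativistic Maxwellian with proper number density `n₀`, temperature `T₀`,
velocity `u`. -/
def Mc (c n₀ T₀ : ℝ) (u p : V3) : ℝ :=
  n₀ * (c ^ 2 / T₀) / (4 * π * c ^ 3 * besselK 2 (c ^ 2 / T₀)) *
    Real.exp ((dot u p - en c u * en c p) / T₀)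

/-- Global Maxwellian `J_c`. -/
def Jc (c nM TM : ℝ) (p : V3) : ℝ :=
  nM * (c ^ 2 / TM) / (4 * π * c ^ 3 * besselK 2 (c ^ 2 / TM)) *
    Real.exp (-(c * en c p) / TM)

def gamma0 (c : ℝ) (p q : V3) : ℝ := (en c p + en c q) / Real.sqrt (sOf c p q)

/-- Post-collision momentum `p′`. -/
def pPost (c : ℝ) (p q w : V3) : V3 :=
  (1 / 2 : ℝ) • (p + q) +
    (grel c p q / 2) • (w + ((gamma0 c p q - 1) * (dot (p + q) w / ‖p + q‖ ^ 2)) • (p + q))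

/-- Post-collision momentum `q′`. -/
def qPost (c : ℝ) (p q w : V3) : V3 :=
  (1 / 2 : ℝ) • (p + q) -
    (grel c p q / 2) • (w + ((gamma0 c p q - 1) * (dot (p + q) w / ‖p + q‖ ^ 2)) • (p + q))

/-- Unit vector on `S²` with polar angles `θ, φ`. -/
def sphCoord (θ φ : ℝ) : V3 :=
  (EuclideanSpace.equiv (Fin 3) ℝ).symm
    ![Real.sin θ * Real.cos φ, Real.sin θ * Real.sin φ, Real.cos θ]

/-- Surface integral over the unit sphere `S² ⊂ ℝ³`. -/
def sphInt (f : V3 → ℝ) : ℝ :=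
  ∫ θ in Set.Ioc (0 : ℝ) π, ∫ φ in Set.Ioc (0 : ℝ) (2 * π), Real.sin θ * f (sphCoord θ φ)

/-- Relativistic Boltzmann collision operator (hard-ball cross section `ς ≡ 1`). -/
def Qc (c : ℝ) (F G : V3 → ℝ) (p : V3) : ℝ :=
  ∫ q : V3, sphInt fun w =>
    vphi c p q * (F (pPost c p q w) * G (qPost c p q w) - F p * G q)

/-- Collision frequency `ν_c`. -/
def nuc (c n₀ T₀ : ℝ) (u p : V3) : ℝ :=
  ∫ q : V3, sphInt fun _ => vphi c p q * Mc c n₀ T₀ u q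

/-- Linearized collision operator `L_c`. -/
def Lc (c n₀ T₀ : ℝ) (u : V3) (f : V3 → ℝ) (p : V3) : ℝ :=
  -(Real.sqrt (Mc c n₀ T₀ u p))⁻¹ *
    (Qc c (fun q => Real.sqrt (Mc c n₀ T₀ u q) * f q) (Mc c n₀ T₀ u) p +
     Qc c (Mc c n₀ T₀ u) (fun q => Real.sqrt (Mc c n₀ T₀ u q) * f q) p)

/-- Membership in the null space `N_c` of `L_c`. -/
def memNc (c n₀ T₀ : ℝ) (u : V3) (h : V3 → ℝ) : Prop :=
  ∃ (a d : ℝ) (b : V3), ∀ p, h p = (a + dot b p + d * en c p) * Real.sqrt (Mc c n₀ T₀ u p)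

/-- Lorentz boosted momentum `p̄`. -/
def pbar (c : ℝ) (u p : V3) : V3 :=
  p - (en c p / c) • u + ((en c u / c - 1) * (dot u p / ‖u‖ ^ 2)) • u

/-- Kernel of the loss part `K_{c1}`. -/
def kc1 (c n₀ T₀ : ℝ) (u p q : V3) : ℝ :=
  π * c * grel c p q * Real.sqrt (sOf c p q) / (en c p * en c q) *
    Real.sqrt (Mc c n₀ T₀ u p * Mc c n₀ T₀ u q)

def Jfun1 (l j : ℝ) : ℝ :=
  l / (l ^ 2 - j ^ 2) * (1 + 1 / Real.sqrt (l ^ 2 - j ^ 2)) *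
    Real.exp (-Real.sqrt (l ^ 2 - j ^ 2))

def Jfun2 (l j : ℝ) : ℝ :=
  1 / Real.sqrt (l ^ 2 - j ^ 2) * Real.exp (-Real.sqrt (l ^ 2 - j ^ 2))

def lbar (c T₀ : ℝ) (u p q : V3) : ℝ := c * (en c (pbar c u p) + en c (pbar c u q)) / (2 * T₀)

def jbar (c T₀ : ℝ) (u p q : V3) : ℝ :=
  c * ‖cross (pbar c u p) (pbar c u q)‖ / (grel c p q * T₀)

/-- Kernel of the gain part `K_{c2}`. -/
def kc2 (c n₀ T₀ : ℝ) (u p q : V3) : ℝ :=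
  c * (n₀ * (c ^ 2 / T₀) / (4 * π * c ^ 3 * besselK 2 (c ^ 2 / T₀))) * π *
      (sOf c p q) ^ ((3 : ℝ) / 2) / (4 * grel c p q * en c p * en c q) *
    (Jfun1 (lbar c T₀ u p q) (jbar c T₀ u p q) + Jfun2 (lbar c T₀ u p q) (jbar c T₀ u p q))

/-- Momentum weight `w_ℓ`. -/
def wl (l : ℝ) (p : V3) : ℝ := (1 + ‖p‖ ^ 2) ^ (l / 2)

/-- Spatial partial derivative in direction `i`. -/
def pd (f : V3 → ℝ) (i : Fin 3) (x : V3) : ℝ := fderiv ℝ f x (EuclideanSpace.single i 1)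

/-- Spatial divergence. -/
def div3 (f : V3 → V3) (x : V3) : ℝ := ∑ i, pd (fun y => f y i) i x

/-- Time derivative. -/
def tderiv (f : ℝ → V3 → ℝ) (t : ℝ) (x : V3) : ℝ := deriv (fun s => f s x) t

/-- Proper energy density `e₀`. -/
def e0 (c n₀ T₀ : ℝ) : ℝ :=
  c ^ 2 * n₀ * besselK 1 (c ^ 2 / T₀) / besselK 2 (c ^ 2 / T₀) + 3 * (n₀ * T₀)

/-- Relativistic entropy per particle `S`, determined by
`n₀ = 4π e⁴ c³ e^{−S} (K₂(γ)/γ) exp(γK₁(γ)/K₂(γ))`. -/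
def entS (c n₀ T₀ : ℝ) : ℝ :=
  Real.log (4 * π * Real.exp 4 * c ^ 3 * besselK 2 (c ^ 2 / T₀) / (c ^ 2 / T₀)) +
    (c ^ 2 / T₀) * besselK 1 (c ^ 2 / T₀) / besselK 2 (c ^ 2 / T₀) - Real.log n₀

/-- Classical entropy `η = −ln((2π)^{−3/2} e^{−5/2} ρ θ^{−3/2})`. -/
def entEta (ρ θ : ℝ) : ℝ :=
  -Real.log ((2 * π) ^ (-(3 : ℝ) / 2) * Real.exp (-(5 : ℝ) / 2) * ρ * θ ^ (-(3 : ℝ) / 2))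

/-- Classical local Maxwellian `μ`. -/
def muM (ρ θ : ℝ) (v p : V3) : ℝ :=
  ρ / (2 * π * θ) ^ ((3 : ℝ) / 2) * Real.exp (-‖p - v‖ ^ 2 / (2 * θ))

/-- The relativistic Euler equations at a point `(t,x)`. -/
def RelEulerAt (c : ℝ) (n₀ T₀ : ℝ → V3 → ℝ) (u : ℝ → V3 → V3) (t : ℝ) (x : V3) : Prop :=
  (1 / c) * tderiv (fun s y => n₀ s y * en c (u s y)) t x +
      div3 (fun y => n₀ t y • u t y) x = 0 ∧
  (∀ j : Fin 3,
    (1 / c) * tderiv (fun s y =>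
        (e0 c (n₀ s y) (T₀ s y) + n₀ s y * T₀ s y) * en c (u s y) * u s y j) t x +
      (∑ i, pd (fun y =>
        (e0 c (n₀ t y) (T₀ t y) + n₀ t y * T₀ t y) * u t y i * u t y j) i x) +
      c ^ 2 * pd (fun y => n₀ t y * T₀ t y) j x = 0) ∧
  (1 / c) * tderiv (fun s y =>
      (e0 c (n₀ s y) (T₀ s y) + n₀ s y * T₀ s y) * en c (u s y) ^ 2 -
        c ^ 2 * (n₀ s y * T₀ s y)) t x +
    div3 (fun y =>
      ((e0 c (n₀ t y) (T₀ t y) + n₀ t y * T₀ t y) * en c (u t y)) • u t y) x = 0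

/-- The classical compressible Euler equations at a point `(t,x)`. -/
def ClassEulerAt (ρ θ : ℝ → V3 → ℝ) (v : ℝ → V3 → V3) (t : ℝ) (x : V3) : Prop :=
  tderiv ρ t x + div3 (fun y => ρ t y • v t y) x = 0 ∧
  (∀ j : Fin 3,
    tderiv (fun s y => ρ s y * v s y j) t x +
      (∑ i, pd (fun y => ρ t y * v t y i * v t y j) i x) +
      pd (fun y => ρ t y * θ t y) j x = 0) ∧
  tderiv (fun s y => ρ s y * (‖v s y‖ ^ 2 / 2 + (3 / 2) * θ s y)) t x +
    div3 (fun y =>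
      (ρ t y * (‖v t y‖ ^ 2 / 2 + (3 / 2) * θ t y) + ρ t y * θ t y) • v t y) x = 0

/-- Squared `H^N(ℝ³)` norm. -/
def hSq {E : Type*} [NormedAddCommGroup E] [NormedSpace ℝ E] (N : ℕ) (f : V3 → E) : ℝ :=
  ∑ n ∈ Finset.range (N + 1), ∫ x : V3, ‖iteratedFDeriv ℝ n f x‖ ^ 2

/-- Membership in `H^N(ℝ³)` (strong, classical-derivative form). -/
def memHN {E : Type*} [NormedAddCommGroup E] [NormedSpace ℝ E] (N : ℕ) (f : V3 → E) : Prop :=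
  ContDiff ℝ N f ∧ ∀ n ≤ N, MemLp (fun x => iteratedFDeriv ℝ n f x) 2 volume


/-- The state map `V = (P₀, u, S)` of a relativistic Euler solution. -/
def Vstate (c : ℝ) (n₀ T₀ : ℝ → V3 → ℝ) (u : ℝ → V3 → V3) (t : ℝ) (x : V3) : ℝ × V3 × ℝ :=
  (n₀ t x * T₀ t x, u t x, entS c (n₀ t x) (T₀ t x))

/-- The state map `W = (𝒫, 𝔲, η)` of a classical Euler solution. -/
def Wstate (ρ θ : ℝ → V3 → ℝ) (v : ℝ → V3 → V3) (t : ℝ) (x : V3) : ℝ × V3 × ℝ :=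
  (ρ t x * θ t x, v t x, entEta (ρ t x) (θ t x))

/-- Local Maxwellian along a relativistic Euler solution. -/
def McE (c : ℝ) (n₀ T₀ : ℝ → V3 → ℝ) (u : ℝ → V3 → V3) (t : ℝ) (x p : V3) : ℝ :=
  Mc c (n₀ t x) (T₀ t x) (u t x) p

/-- Remainder of the truncated Hilbert expansion of order `k`. -/
def FRem (ε : ℝ) (k : ℕ) (Fn : ℕ → ℝ → V3 → V3 → ℝ) (F : ℝ → V3 → V3 → ℝ)
    (t : ℝ) (x p : V3) : ℝ :=
  (F t x p - ∑ n ∈ Finset.range (2 * k), ε ^ n * Fn n t x p) / ε ^ k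

/-- The combined norm `ε^{3/2} ‖w_ℓ G /√J_c‖_{L^∞_{x,p}} + ‖G/√M_c‖_{L²_{x,p}}`
appearing in Theorem 1.1. -/
def XNorm (l ε c nM TM : ℝ) (Msl : V3 → V3 → ℝ) (G : V3 → V3 → ℝ) : ℝ≥0∞ :=
  ENNReal.ofReal (ε ^ ((3 : ℝ) / 2)) *
      eLpNorm (fun xp : V3 × V3 =>
        wl l xp.2 * G xp.1 xp.2 / Real.sqrt (Jc c nM TM xp.2)) ⊤ volume
    + eLpNorm (fun xp : V3 × V3 => G xp.1 xp.2 / Real.sqrt (Msl xp.1 xp.2)) 2 volume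

/-- `F` is a nonnegative classical solution on `[0,T]` of the scaled relativistic
Boltzmann equation `∂_t F + p̂·∇ₓF = ε⁻¹ Q_c(F,F)`. -/
def IsBoltzSol (c ε T : ℝ) (F : ℝ → V3 → V3 → ℝ) : Prop :=
  (∀ t ∈ Set.Icc (0 : ℝ) T, ∀ (x p : V3), 0 ≤ F t x p) ∧
  ∀ t ∈ Set.Icc (0 : ℝ) T, ∀ (x p : V3),
    DifferentiableAt ℝ (fun s => F s x p) t ∧
    DifferentiableAt ℝ (fun y => F t y p) x ∧
    deriv (fun s => F s x p) t + fderiv ℝ (fun y => F t y p) x (phat c p)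
      = (1 / ε) * Qc c (fun p2 => F t x p2) (fun p2 => F t x p2) p

end RBE

open RBE


private lemma collision_aux (c e1 e2 D P Q X2 pm2 : ℝ)
    (hc : 0 < c) (hP : 0 ≤ P) (hQ : 0 ≤ Q)
    (he1 : e1 ^ 2 = c ^ 2 + P ^ 2) (he2 : e2 ^ 2 = c ^ 2 + Q ^ 2)
    (he1p : 0 < e1) (he2p : 0 < e2)
    (hX : X2 = P ^ 2 * Q ^ 2 - D ^ 2) (hX0 : 0 ≤ X2)
    (hpm : pm2 = P ^ 2 + Q ^ 2 - 2 * D) :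
    0 ≤ e1 * e2 - D - c ^ 2 ∧
    X2 + c ^ 2 * pm2 ≤ 2 * (e1 * e2 - D - c ^ 2) * (e1 * e2) ∧
    2 * (e1 * e2 - D - c ^ 2) ≤ pm2 ∧
    2 * (e1 * e2 - D - c ^ 2) + 4 * c ^ 2 ≤ 4 * (e1 * e2) ∧
    (0 < pm2 → 0 < 2 * (e1 * e2 - D - c ^ 2)) ∧
    2 * (e1 * e2 - D - c ^ 2) * (e1 + e2) ^ 2 - 4 * X2
      = (2 * (e1 * e2 - D - c ^ 2) + 4 * c ^ 2) * pm2 := by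
  have hc2 : (0:ℝ) < c ^ 2 := by positivity
  have hD2 : D ^ 2 ≤ P ^ 2 * Q ^ 2 := by nlinarith
  have hD1 : D ≤ P * Q := by nlinarith [mul_nonneg hP hQ]
  have hDm : -(P * Q) ≤ D := by nlinarith [mul_nonneg hP hQ]
  have hprod : (e1 * e2) ^ 2 = (c ^ 2 + P ^ 2) * (c ^ 2 + Q ^ 2) := by
    rw [mul_pow, he1, he2]
  have hee : c ^ 2 + P * Q ≤ e1 * e2 := by
    nlinarith [hprod, sq_nonneg (P - Q), mul_pos he1p he2p, mul_nonneg hP hQ]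
  have hE : 0 ≤ e1 * e2 - D - c ^ 2 := by linarith
  have hid2 : (e1 * e2 - D - c ^ 2) * (e1 * e2 + D + c ^ 2) = X2 + c ^ 2 * pm2 := by
    rw [hX, hpm]; linear_combination hprod
  refine ⟨hE, ?_, ?_, ?_, ?_, ?_⟩
  · nlinarith [hid2, sq_nonneg (e1 * e2 - D - c ^ 2), hE, hee]
  · rw [hpm]; nlinarith [sq_nonneg (e1 - e2)]
  · linarith
  · intro h
    have h3 : 0 < e1 * e2 + D + c ^ 2 := by linarith
    have h4 : 0 < (e1 * e2 - D - c ^ 2) * (e1 * e2 + D + c ^ 2) := by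
      rw [hid2]; nlinarith [mul_pos hc2 h]
    nlinarith [h3, h4]
  · rw [hX, hpm]
    linear_combination 4 * hprod + 2 * (e1 * e2 - D - c ^ 2) * (he1 + he2)

set_option maxHeartbeats 1000000 in
/-- Lemma 4.1, items (i)–(iii): basic estimates on the relativistic collision
kinematics. -/
theorem collision_kinematics (c : ℝ) (hc : 0 < c) (p q : V3) :
    (Real.sqrt (‖cross p q‖ ^ 2 + c ^ 2 * ‖p - q‖ ^ 2) / Real.sqrt (en c p * en c q)
        ≤ grel c p q ∧
      grel c p q ≤ ‖p - q‖ ∧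
      grel c p q ^ 2 < sOf c p q ∧ sOf c p q ≤ 4 * (en c p * en c q)) ∧
    vphi c p q ≤ min c (‖p - q‖ / 2) ∧
    (p ≠ q →
      (c * (en c p + en c q) / 2) ^ 2 - (c * ‖cross p q‖ / grel c p q) ^ 2
          = sOf c p q * c ^ 2 * ‖p - q‖ ^ 2 / (4 * grel c p q ^ 2) ∧
        c ^ 4 + c ^ 2 / 4 * ‖p - q‖ ^ 2
          ≤ (c * (en c p + en c q) / 2) ^ 2 - (c * ‖cross p q‖ / grel c p q) ^ 2) := by
  have hP : (0:ℝ) ≤ ‖p‖ := norm_nonneg p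
  have hQ : (0:ℝ) ≤ ‖q‖ := norm_nonneg q
  have hLag : ‖cross p q‖ ^ 2 = ‖p‖ ^ 2 * ‖q‖ ^ 2 - dot p q ^ 2 := by
    have hnp : ‖p‖ ^ 2 = p 0 ^ 2 + p 1 ^ 2 + p 2 ^ 2 := by
      rw [EuclideanSpace.norm_eq, Real.sq_sqrt (by positivity)]; simp [Fin.sum_univ_three]
    have hnq : ‖q‖ ^ 2 = q 0 ^ 2 + q 1 ^ 2 + q 2 ^ 2 := by
      rw [EuclideanSpace.norm_eq, Real.sq_sqrt (by positivity)]; simp [Fin.sum_univ_three]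
    have hdot : dot p q = p 0 * q 0 + p 1 * q 1 + p 2 * q 2 := by
      simp [dot, Fin.sum_univ_three]
    have hcr : ‖cross p q‖ ^ 2 =
        (p 1 * q 2 - p 2 * q 1) ^ 2 + (p 2 * q 0 - p 0 * q 2) ^ 2 +
          (p 0 * q 1 - p 1 * q 0) ^ 2 := by
      rw [EuclideanSpace.norm_eq, Real.sq_sqrt (by positivity)]
      simp [cross, Fin.sum_univ_three]
    rw [hcr, hnp, hnq, hdot]; ring
  have hpm : ‖p - q‖ ^ 2 = ‖p‖ ^ 2 + ‖q‖ ^ 2 - 2 * dot p q := by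
    have hnp : ‖p‖ ^ 2 = p 0 ^ 2 + p 1 ^ 2 + p 2 ^ 2 := by
      rw [EuclideanSpace.norm_eq, Real.sq_sqrt (by positivity)]; simp [Fin.sum_univ_three]
    have hnq : ‖q‖ ^ 2 = q 0 ^ 2 + q 1 ^ 2 + q 2 ^ 2 := by
      rw [EuclideanSpace.norm_eq, Real.sq_sqrt (by positivity)]; simp [Fin.sum_univ_three]
    have hdot : dot p q = p 0 * q 0 + p 1 * q 1 + p 2 * q 2 := by
      simp [dot, Fin.sum_univ_three]
    have hsub : ‖p - q‖ ^ 2 = (p 0 - q 0) ^ 2 + (p 1 - q 1) ^ 2 + (p 2 - q 2) ^ 2 := by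
      rw [EuclideanSpace.norm_eq, Real.sq_sqrt (by positivity)]
      simp [Fin.sum_univ_three]
    rw [hsub, hnp, hnq, hdot]; ring
  have he1sq : en c p ^ 2 = c ^ 2 + ‖p‖ ^ 2 := Real.sq_sqrt (by positivity)
  have he2sq : en c q ^ 2 = c ^ 2 + ‖q‖ ^ 2 := Real.sq_sqrt (by positivity)
  have he1pos : 0 < en c p := Real.sqrt_pos.mpr (by positivity)
  have he2pos : 0 < en c q := Real.sqrt_pos.mpr (by positivity)
  have hApos : 0 < en c p * en c q := mul_pos he1pos he2pos
  obtain ⟨hE, h1, hgle2, hid4, hposg, hpoly⟩ :=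
    collision_aux c (en c p) (en c q) (dot p q) ‖p‖ ‖q‖ (‖cross p q‖ ^ 2) (‖p - q‖ ^ 2)
      hc hP hQ he1sq he2sq he1pos he2pos hLag (sq_nonneg _) hpm
  clear hLag hpm
  have hg0 : 0 ≤ grel c p q := Real.sqrt_nonneg _
  have hg2 : grel c p q ^ 2 = 2 * (en c p * en c q - dot p q - c ^ 2) :=
    Real.sq_sqrt (by linarith)
  rw [← hg2] at h1 hgle2 hid4 hposg hpoly
  clear hE
  have hc2 : (0:ℝ) < c ^ 2 := by positivity
  -- (i) second inequality
  have hib : grel c p q ≤ ‖p - q‖ := by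
    calc grel c p q = Real.sqrt (grel c p q ^ 2) := (Real.sqrt_sq hg0).symm
      _ ≤ Real.sqrt (‖p - q‖ ^ 2) := Real.sqrt_le_sqrt hgle2
      _ = ‖p - q‖ := Real.sqrt_sq (norm_nonneg _)
  -- (i) first inequality
  have hia : Real.sqrt (‖cross p q‖ ^ 2 + c ^ 2 * ‖p - q‖ ^ 2) /
      Real.sqrt (en c p * en c q) ≤ grel c p q := by
    rw [div_le_iff₀ (Real.sqrt_pos.mpr hApos)]
    have h2 : (grel c p q * Real.sqrt (en c p * en c q)) ^ 2 =
        grel c p q ^ 2 * (en c p * en c q) := by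
      rw [mul_pow, Real.sq_sqrt hApos.le]
    calc Real.sqrt (‖cross p q‖ ^ 2 + c ^ 2 * ‖p - q‖ ^ 2)
        ≤ Real.sqrt ((grel c p q * Real.sqrt (en c p * en c q)) ^ 2) :=
          Real.sqrt_le_sqrt (by rw [h2]; linarith)
      _ = grel c p q * Real.sqrt (en c p * en c q) :=
          Real.sqrt_sq (mul_nonneg hg0 (Real.sqrt_nonneg _))
  -- (i) third and fourth
  have hic : grel c p q ^ 2 < sOf c p q := by simp only [sOf]; linarith
  have hid4' : sOf c p q ≤ 4 * (en c p * en c q) := by simp only [sOf]; linarith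
  -- (ii)
  have hs0 : 0 ≤ sOf c p q := by simp only [sOf]; positivity
  have hss : Real.sqrt (sOf c p q) ^ 2 = sOf c p q := Real.sq_sqrt hs0
  have hgs : grel c p q ≤ Real.sqrt (sOf c p q) := by
    calc grel c p q = Real.sqrt (grel c p q ^ 2) := (Real.sqrt_sq hg0).symm
      _ ≤ Real.sqrt (sOf c p q) := Real.sqrt_le_sqrt hic.le
  have hgs4 : grel c p q * Real.sqrt (sOf c p q) ≤ 4 * (en c p * en c q) := by
    calc grel c p q * Real.sqrt (sOf c p q)
        ≤ Real.sqrt (sOf c p q) * Real.sqrt (sOf c p q) :=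
          mul_le_mul_of_nonneg_right hgs (Real.sqrt_nonneg _)
      _ = sOf c p q := by rw [← sq]; exact hss
      _ ≤ 4 * (en c p * en c q) := hid4'
  have hv_c : vphi c p q ≤ c := by
    simp only [vphi]
    have h3 : grel c p q * Real.sqrt (sOf c p q) / (en c p * en c q) ≤ 4 := by
      rw [div_le_iff₀ hApos]; linarith
    have h4 := mul_le_mul_of_nonneg_left h3 (by positivity : (0:ℝ) ≤ c / 4)
    linarith
  have hSc : c ≤ Real.sqrt (en c p * en c q) := by
    calc c = Real.sqrt (c ^ 2) := (Real.sqrt_sq hc.le).symm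
      _ ≤ Real.sqrt (en c p * en c q) := Real.sqrt_le_sqrt (by nlinarith [hgle2, hg2, hApos])
  have hS2 : Real.sqrt (en c p * en c q) ^ 2 = en c p * en c q := Real.sq_sqrt hApos.le
  have hsle : Real.sqrt (sOf c p q) ≤ 2 * Real.sqrt (en c p * en c q) := by
    calc Real.sqrt (sOf c p q)
        ≤ Real.sqrt ((2 * Real.sqrt (en c p * en c q)) ^ 2) :=
          Real.sqrt_le_sqrt (by rw [mul_pow, hS2]; norm_num; linarith)
      _ = 2 * Real.sqrt (en c p * en c q) := Real.sqrt_sq (by positivity)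
  have hv_pm : vphi c p q ≤ ‖p - q‖ / 2 := by
    have k1 : grel c p q * Real.sqrt (sOf c p q) ≤
        ‖p - q‖ * (2 * Real.sqrt (en c p * en c q)) :=
      mul_le_mul hib hsle (Real.sqrt_nonneg _) (norm_nonneg _)
    have k2 : c * (grel c p q * Real.sqrt (sOf c p q)) ≤
        Real.sqrt (en c p * en c q) * (‖p - q‖ * (2 * Real.sqrt (en c p * en c q))) :=
      mul_le_mul hSc k1 (mul_nonneg hg0 (Real.sqrt_nonneg _)) (Real.sqrt_nonneg _)
    have k3 : c * (grel c p q * Real.sqrt (sOf c p q)) ≤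
        2 * ‖p - q‖ * (en c p * en c q) := by
      calc c * (grel c p q * Real.sqrt (sOf c p q))
          ≤ Real.sqrt (en c p * en c q) * (‖p - q‖ * (2 * Real.sqrt (en c p * en c q))) := k2
        _ = 2 * ‖p - q‖ * (en c p * en c q) := by linear_combination 2 * ‖p - q‖ * hS2
    simp only [vphi]
    rw [div_mul_div_comm, div_le_div_iff₀ (by positivity) (by norm_num : (0:ℝ) < 2)]
    linarith
  -- (iii)
  refine ⟨⟨hia, hib, hic, hid4'⟩, le_min hv_c hv_pm, fun hpq => ?_⟩
  have hpm0 : 0 < ‖p - q‖ := by rw [norm_pos_iff, sub_ne_zero]; exact hpq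
  have hg2pos : 0 < grel c p q ^ 2 := hposg (by positivity)
  have hgpos : 0 < grel c p q := lt_of_le_of_ne hg0 (by
    intro h0
    rw [← h0] at hg2pos
    simp at hg2pos)
  have hgne : grel c p q ≠ 0 := ne_of_gt hgpos
  have heq : (c * (en c p + en c q) / 2) ^ 2 - (c * ‖cross p q‖ / grel c p q) ^ 2 =
      sOf c p q * c ^ 2 * ‖p - q‖ ^ 2 / (4 * grel c p q ^ 2) := by
    simp only [sOf]
    have hinv : grel c p q * (grel c p q)⁻¹ = 1 := mul_inv_cancel₀ hgne
    rw [eq_div_iff (by positivity)]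
    linear_combination c ^ 2 * hpoly - 4 * c ^ 2 * ‖cross p q‖ ^ 2 * (grel c p q * (grel c p q)⁻¹ + 1) * hinv
  refine ⟨heq, ?_⟩
  rw [heq]
  simp only [sOf]
  rw [le_div_iff₀ (by positivity)]
  nlinarith [hgle2, pow_pos hc 4, mul_nonneg (pow_pos hc 4).le (sub_nonneg.mpr hgle2), hg2pos]
end
end

section
/- Estimates for the Lorentz-boosted momentum (Lemma 4.2). Let C̄₀ > 0. There exists c₀ ≥ 1 depending only on C̄₀ such that for all c ≥ c₀, all u ∈ ℝ³ with 0 < |u| ≤ C̄₀, and all p, q ∈ ℝ³: (a) (1/2)|p−q| ≤ |p̄−q̄| ≤ (3/2)|p−q|; (b) (1/2)p⁰ ≤ p̄⁰ ≤ (3/2)p⁰; (c) |p|/2 − C̄₀ ≤ |p̄| ≤ (3/2)|p| + C̄₀; (d) the 3×3 Jacobian matrix with entries ∂p̄_i/∂p_j = δ_{ij} + (u⁰/c − 1)u_iu_j/|u|² − u_i p_j/(c p⁰) has determinant in [1/2, 3/2]. -/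
open MeasureTheory Real Set
open scoped BigOperators ENNReal ContDiff

noncomputable section

open RBE



section LorentzAux

lemma RBE.en_pos' {c : ℝ} (hc : 0 < c) (p : V3) : 0 < en c p :=
  Real.sqrt_pos.2 (by positivity)

lemma RBE.le_en' {c : ℝ} (hc : 0 ≤ c) (p : V3) : c ≤ en c p := by
  rw [en, show c = Real.sqrt (c^2) from (Real.sqrt_sq hc).symm]
  exact Real.sqrt_le_sqrt (by nlinarith [sq_nonneg ‖p‖, Real.sq_sqrt (sq_nonneg c)])

lemma RBE.norm_le_en' {c : ℝ} (p : V3) : ‖p‖ ≤ en c p := by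
  rw [en, show ‖p‖ = Real.sqrt (‖p‖^2) from (Real.sqrt_sq (norm_nonneg p)).symm]
  exact Real.sqrt_le_sqrt (by nlinarith [sq_nonneg c, Real.sq_sqrt (sq_nonneg ‖p‖)])

lemma RBE.en_le' {c : ℝ} (hc : 0 ≤ c) (p : V3) : en c p ≤ c + ‖p‖ := by
  rw [en, show c + ‖p‖ = Real.sqrt ((c + ‖p‖)^2) from (Real.sqrt_sq (by positivity)).symm]
  exact Real.sqrt_le_sqrt (by nlinarith [norm_nonneg p])

lemma RBE.en_lip' {c : ℝ} (hc : 0 ≤ c) (p q : V3) : |en c p - en c q| ≤ ‖p - q‖ := by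
  have key : ∀ a b : V3, en c a ≤ en c b + ‖a - b‖ := by
    intro a b
    have hab : ‖a‖ ≤ ‖b‖ + ‖a - b‖ := norm_le_norm_add_norm_sub' a b
    have hS : (en c b)^2 = c^2 + ‖b‖^2 := Real.sq_sqrt (by positivity)
    have hbS : ‖b‖ ≤ en c b := RBE.norm_le_en' b
    have hbn : (0:ℝ) ≤ en c b := Real.sqrt_nonneg _
    rw [en, show en c b + ‖a - b‖ = Real.sqrt ((en c b + ‖a - b‖)^2) from
      (Real.sqrt_sq (by positivity)).symm]
    exact Real.sqrt_le_sqrt (by nlinarith [norm_nonneg (a - b), norm_nonneg a])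
  rw [abs_sub_le_iff]
  refine ⟨by have := key p q; linarith, ?_⟩
  have := key q p; rw [norm_sub_rev] at this; linarith

lemma RBE.en_u_le' {c : ℝ} (hc : 0 < c) (u : V3) : en c u ≤ c + ‖u‖^2 / (2*c) := by
  rw [en, show c + ‖u‖^2/(2*c) = Real.sqrt ((c + ‖u‖^2/(2*c))^2) from
    (Real.sqrt_sq (by positivity)).symm]
  apply Real.sqrt_le_sqrt
  have h1 : (c + ‖u‖^2/(2*c))^2 = c^2 + ‖u‖^2 + (‖u‖^2/(2*c))^2 := by field_simp; ring
  nlinarith [sq_nonneg (‖u‖^2/(2*c))]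

lemma RBE.dot_eq_inner' (u a : V3) : dot u a = inner ℝ u a := by
  simp [dot, PiLp.inner_apply, RCLike.inner_apply, mul_comm]

lemma RBE.abs_dot_le' (u a : V3) : |dot u a| ≤ ‖u‖ * ‖a‖ := by
  rw [RBE.dot_eq_inner']
  exact abs_real_inner_le_norm u a

lemma RBE.dot_sub' (u a b : V3) : dot u (a - b) = dot u a - dot u b := by
  simp [RBE.dot_eq_inner', inner_sub_right]

lemma RBE.pbar_eq' (c : ℝ) (u a : V3) :
    pbar c u a = a + ((en c u / c - 1) * (dot u a / ‖u‖ ^ 2) - en c a / c) • u := by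
  rw [pbar]; module

lemma RBE.det_eq' (c : ℝ) (u p : V3) (hu : ‖u‖ ≠ 0) (hc : c ≠ 0) (he : en c p ≠ 0) :
    Matrix.det (Matrix.of fun i j : Fin 3 =>
        (if i = j then (1 : ℝ) else 0) + (en c u / c - 1) * (u i * u j) / ‖u‖ ^ 2
          - u i * p j / (c * en c p))
    = en c u / c - dot u p / (c * en c p) := by
  set v : Fin 3 → ℝ := fun j => (en c u / c - 1) * u j / ‖u‖ ^ 2 - p j / (c * en c p) with hv
  have hM : (Matrix.of fun i j : Fin 3 =>
        (if i = j then (1 : ℝ) else 0) + (en c u / c - 1) * (u i * u j) / ‖u‖ ^ 2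
          - u i * p j / (c * en c p))
      = 1 + Matrix.replicateCol Unit (fun i => u i) * Matrix.replicateRow Unit v := by
    ext i j
    simp [Matrix.mul_apply, Matrix.one_apply, hv]
    ring
  rw [hM, Matrix.det_one_add_replicateCol_mul_replicateRow]
  have hN : ‖u‖^2 = u 0^2 + u 1^2 + u 2^2 := by
    simp [EuclideanSpace.norm_eq, Fin.sum_univ_three]
    rw [Real.sq_sqrt]; positivity
  have hdot : dot u p = u 0 * p 0 + u 1 * p 1 + u 2 * p 2 := by
    simp [dot, Fin.sum_univ_three]
  have hN2 : ‖u‖^2 ≠ 0 := pow_ne_zero 2 hu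
  simp [dotProduct, Fin.sum_univ_three, hv, hdot]
  field_simp
  linear_combination (c * en c p - en c p * en c u) * hN

end LorentzAux

set_option maxHeartbeats 2000000 in
/-- Lemma 4.2: estimates for the Lorentz-boosted momentum `p̄`. -/
theorem lorentz_boost_bounds (C0 : ℝ) (hC0 : 0 < C0) :
    ∃ c₀ : ℝ, 1 ≤ c₀ ∧
      ∀ c : ℝ, c₀ ≤ c →
      ∀ u : V3, u ≠ 0 → ‖u‖ ≤ C0 →
      ∀ p q : V3,
        ((1 / 2) * ‖p - q‖ ≤ ‖pbar c u p - pbar c u q‖ ∧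
          ‖pbar c u p - pbar c u q‖ ≤ (3 / 2) * ‖p - q‖) ∧
        ((1 / 2) * en c p ≤ en c (pbar c u p) ∧ en c (pbar c u p) ≤ (3 / 2) * en c p) ∧
        (‖p‖ / 2 - C0 ≤ ‖pbar c u p‖ ∧ ‖pbar c u p‖ ≤ (3 / 2) * ‖p‖ + C0) ∧
        Matrix.det (Matrix.of fun i j : Fin 3 =>
            (if i = j then (1 : ℝ) else 0) + (en c u / c - 1) * (u i * u j) / ‖u‖ ^ 2
              - u i * p j / (c * en c p)) ∈ Set.Icc (1 / 2 : ℝ) (3 / 2) := by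
  refine ⟨max 1 (4 * C0), le_max_left _ _, ?_⟩
  intro c hc u hu0 huC p q
  have hc1 : (1:ℝ) ≤ c := le_trans (le_max_left _ _) hc
  have hc4 : 4 * C0 ≤ c := le_trans (le_max_right _ _) hc
  have hcpos : (0:ℝ) < c := by linarith
  have hun : (0:ℝ) < ‖u‖ := norm_pos_iff.2 hu0
  have huc : ‖u‖ ≤ c / 4 := by linarith
  set A : ℝ := en c u / c - 1 with hAdef
  have hA0 : 0 ≤ A := by
    have := RBE.le_en' hcpos.le u
    rw [hAdef]
    rw [sub_nonneg, le_div_iff₀ hcpos]; linarith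
  have hA : A ≤ 1 / 32 := by
    have h1 : en c u ≤ c + ‖u‖^2 / (2*c) := RBE.en_u_le' hcpos u
    have h2 : ‖u‖^2 ≤ (c/4)^2 := by nlinarith
    rw [hAdef, sub_le_iff_le_add, div_le_iff₀ hcpos]
    have h3 : ‖u‖^2 / (2*c) ≤ c / 32 := by
      rw [div_le_div_iff₀ (by positivity) (by norm_num)]
      nlinarith
    nlinarith
  -- the scalar coefficient
  set sc : V3 → ℝ := fun a => A * (dot u a / ‖u‖ ^ 2) - en c a / c with hsc
  have hpb : ∀ a : V3, pbar c u a = a + sc a • u := fun a => RBE.pbar_eq' c u a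
  -- core estimate on |sc a - sc b| * ‖u‖
  have hcore : ∀ a b : V3, ‖pbar c u a - pbar c u b - (a - b)‖ ≤ (1/2) * ‖a - b‖ := by
    intro a b
    have hrw : pbar c u a - pbar c u b - (a - b) = (sc a - sc b) • u := by
      rw [hpb a, hpb b]; module
    rw [hrw, norm_smul, Real.norm_eq_abs]
    have hd : sc a - sc b = A * (dot u (a - b) / ‖u‖ ^ 2) - (en c a - en c b) / c := by
      rw [hsc]; simp only [RBE.dot_sub' u a b]; ring
    have hD : |dot u (a - b)| ≤ ‖u‖ * ‖a - b‖ := RBE.abs_dot_le' u (a - b)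
    have hlip : |en c a - en c b| ≤ ‖a - b‖ := RBE.en_lip' hcpos.le a b
    have h1 : |sc a - sc b| ≤ A * (‖a - b‖ / ‖u‖) + ‖a - b‖ / c := by
      rw [hd]
      refine le_trans (abs_sub _ _) (add_le_add ?_ ?_)
      · rw [abs_mul, abs_of_nonneg hA0, abs_div, abs_of_nonneg (sq_nonneg ‖u‖)]
        apply mul_le_mul_of_nonneg_left _ hA0
        rw [div_le_div_iff₀ (by positivity) hun]
        calc |dot u (a-b)| * ‖u‖ ≤ (‖u‖ * ‖a - b‖) * ‖u‖ := by
              apply mul_le_mul_of_nonneg_right hD (norm_nonneg u)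
          _ = ‖a - b‖ * ‖u‖ ^ 2 := by ring
      · rw [abs_div, abs_of_pos hcpos]
        gcongr
    calc |sc a - sc b| * ‖u‖ ≤ (A * (‖a - b‖ / ‖u‖) + ‖a - b‖ / c) * ‖u‖ := by
          apply mul_le_mul_of_nonneg_right h1 (norm_nonneg u)
      _ = A * ‖a - b‖ * (‖u‖ / ‖u‖) + ‖a - b‖ * (‖u‖ / c) := by ring
      _ = A * ‖a - b‖ + ‖a - b‖ * (‖u‖ / c) := by rw [div_self hun.ne']; ring
      _ ≤ (1/32) * ‖a - b‖ + ‖a - b‖ * (1/4) := by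
          have h4 : ‖u‖ / c ≤ 1/4 := by rw [div_le_iff₀ hcpos]; linarith
          have := norm_nonneg (a - b)
          gcongr
      _ ≤ (1/2) * ‖a - b‖ := by nlinarith [norm_nonneg (a - b)]
  -- estimate on ‖pbar a - a‖
  have hone : ∀ a : V3, ‖pbar c u a - a‖ ≤ A * ‖a‖ + en c a * (‖u‖ / c) := by
    intro a
    have hrw : pbar c u a - a = sc a • u := by rw [hpb a]; module
    rw [hrw, norm_smul, Real.norm_eq_abs]
    have hD : |dot u a| ≤ ‖u‖ * ‖a‖ := RBE.abs_dot_le' u a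
    have henn : 0 ≤ en c a := Real.sqrt_nonneg _
    have h1 : |sc a| ≤ A * (‖a‖ / ‖u‖) + en c a / c := by
      rw [hsc]
      refine le_trans (abs_sub _ _) (add_le_add ?_ ?_)
      · rw [abs_mul, abs_of_nonneg hA0, abs_div, abs_of_nonneg (sq_nonneg ‖u‖)]
        apply mul_le_mul_of_nonneg_left _ hA0
        rw [div_le_div_iff₀ (by positivity) hun]
        calc |dot u a| * ‖u‖ ≤ (‖u‖ * ‖a‖) * ‖u‖ := by
              apply mul_le_mul_of_nonneg_right hD (norm_nonneg u)
          _ = ‖a‖ * ‖u‖ ^ 2 := by ring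
      · rw [abs_div, abs_of_pos hcpos, abs_of_nonneg henn]
    calc |sc a| * ‖u‖ ≤ (A * (‖a‖ / ‖u‖) + en c a / c) * ‖u‖ := by
          apply mul_le_mul_of_nonneg_right h1 (norm_nonneg u)
      _ = A * ‖a‖ * (‖u‖ / ‖u‖) + en c a * (‖u‖ / c) := by ring
      _ = A * ‖a‖ + en c a * (‖u‖ / c) := by rw [div_self hun.ne']; ring
  have huc4 : ‖u‖ / c ≤ 1/4 := by rw [div_le_iff₀ hcpos]; linarith
  have henp : 0 < en c p := RBE.en_pos' hcpos p
  have hpen : ‖p‖ ≤ en c p := RBE.norm_le_en' p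
  refine ⟨?_, ?_, ?_, ?_⟩
  · -- (a)
    have h := hcore p q
    have e1 : pbar c u p - pbar c u q = (p - q) + (pbar c u p - pbar c u q - (p - q)) := by
      abel
    have t1 : ‖pbar c u p - pbar c u q‖ ≤ ‖p - q‖ + (1/2) * ‖p - q‖ := by
      calc ‖pbar c u p - pbar c u q‖
          = ‖(p - q) + (pbar c u p - pbar c u q - (p - q))‖ := by rw [← e1]
        _ ≤ ‖p - q‖ + ‖pbar c u p - pbar c u q - (p - q)‖ := norm_add_le _ _
        _ ≤ ‖p - q‖ + (1/2) * ‖p - q‖ := by linarith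
    have t2 : ‖p - q‖ - (1/2) * ‖p - q‖ ≤ ‖pbar c u p - pbar c u q‖ := by
      have := norm_sub_norm_le (p - q) ((p - q) - (pbar c u p - pbar c u q))
      have hrw : (p - q) - ((p - q) - (pbar c u p - pbar c u q)) = pbar c u p - pbar c u q := by
        abel
      rw [hrw] at this
      have h2 : ‖(p - q) - (pbar c u p - pbar c u q)‖ = 
          ‖pbar c u p - pbar c u q - (p - q)‖ := norm_sub_rev _ _
      linarith
    exact ⟨by linarith, by linarith⟩
  · -- (b)
    have h := hone p
    have hb : ‖pbar c u p - p‖ ≤ (1/2) * en c p := by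
      have h9 : en c p * (‖u‖ / c) ≤ en c p * (1/4) :=
        mul_le_mul_of_nonneg_left huc4 henp.le
      have h10 : A * ‖p‖ ≤ (1/32) * ‖p‖ := mul_le_mul_of_nonneg_right hA (norm_nonneg p)
      have h11 : (1/32 : ℝ) * ‖p‖ ≤ (1/32) * en c p := by linarith
      linarith
    have hl := RBE.en_lip' hcpos.le (pbar c u p) p
    rw [abs_le] at hl
    constructor
    · nlinarith [hl.1]
    · nlinarith [hl.2]
  · -- (c)
    have h := hone p
    have h3 : en c p * (‖u‖ / c) ≤ C0 + ‖p‖ / 4 := by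
      have h4 : en c p * ‖u‖ ≤ (c + ‖p‖) * C0 :=
        mul_le_mul (RBE.en_le' hcpos.le p) huC (norm_nonneg u) (by positivity)
      rw [mul_div_assoc', div_le_iff₀ hcpos]
      nlinarith [norm_nonneg p, mul_le_mul_of_nonneg_left hc4 (norm_nonneg p)]
    have hb : ‖pbar c u p - p‖ ≤ ‖p‖ / 2 + C0 := by
      have h10 : A * ‖p‖ ≤ (1/32) * ‖p‖ := mul_le_mul_of_nonneg_right hA (norm_nonneg p)
      have := norm_nonneg p
      linarith
    constructor
    · have := norm_sub_norm_le p (p - pbar c u p)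
      have hrw : p - (p - pbar c u p) = pbar c u p := by abel
      rw [hrw, norm_sub_rev] at this
      linarith
    · have := norm_add_le (pbar c u p - p) p
      have hrw : (pbar c u p - p) + p = pbar c u p := by abel
      rw [hrw] at this
      linarith
  · -- (d)
    rw [RBE.det_eq' c u p hun.ne' hcpos.ne' henp.ne']
    have hD : |dot u p| ≤ ‖u‖ * ‖p‖ := RBE.abs_dot_le' u p
    have h5 : |dot u p| ≤ (c/4) * en c p := by
      calc |dot u p| ≤ ‖u‖ * ‖p‖ := hD
        _ ≤ (c/4) * en c p := by
            exact mul_le_mul huc hpen (norm_nonneg p) (by linarith)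
    have h6 : |dot u p / (c * en c p)| ≤ 1/4 := by
      have hce : (0:ℝ) < c * en c p := mul_pos hcpos henp
      rw [abs_div, abs_of_pos hce, div_le_iff₀ hce]
      linarith
    rw [abs_le] at h6
    have h7 : 1 ≤ en c u / c := by
      rw [le_div_iff₀ hcpos]; have := RBE.le_en' hcpos.le u; linarith
    have h8 : en c u / c ≤ 1 + 1/32 := by
      have : A ≤ 1/32 := hA
      rw [hAdef] at this; linarith
    rw [Set.mem_Icc]
    exact ⟨by linarith [h6.1], by linarith [h6.2]⟩
end
end
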